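/- Let T ≥ 3, λ > 0, G > 0, let each f_t : ℝ^d → ℝ be λ-strongly convex and differentiable with ‖∇f_t(w)‖ ≤ G for all w ∈ 𝒟, let w_1 ∈ 𝒟, let the switching budget S satisfy 0 < S ≤ (2G/λ)·log(T + 1), set c = T/(exp(λS/(2G)) − 1) − 1 (so c ≥ 0), and define iterates by w_{t+1} = Π(w_t − η_t·∇f_t(w_t)) with step sizes η_t = 1/(λ(t + c)). Then the continuous switching constraint Σ_{t=2}^T ‖w_t − w_{t−1}‖ ≤ S holds, and the regret satisfies R = Σ_{t=1}^T f_t(w_t) − min_{w ∈ 𝒟} Σ_{t=1}^T f_t(w) ≤ λ·T·D²/(exp(λS/(2G)) − 1) + G·S. -/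

import Mathlib

/-!
With step sizes `η_t = 1 / (λ (t + c))`, strong convexity turns the usual one-step inequality of
projected gradient descent into a telescoping sum of the potentials `(t - 1 + c) ‖w_t - u‖²`, so
the regret against any `u` is at most `λ c D² / 2 + (G² / 2λ) ∑ 1 / (t + c)`, while each step moves
the iterate by at most `η_t G`. Both are governed by `∑_{t ≤ T} 1 / (t + c) ≤ 2 log ((T + 1 + c) /
(1 + c))`, and `c` is chosen so that this logarithm is exactly `λ S / (2 G)`.
-/

open scoped InnerProductSpace BigOperators

/-- Euclidean projection onto the ball `{w : ‖w‖ ≤ D/2}` in `ℝ^d`. -/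
noncomputable def ballProj (d : ℕ) (D : ℝ) (p : EuclideanSpace ℝ (Fin d)) :
    EuclideanSpace ℝ (Fin d) :=
  if ‖p‖ ≤ D / 2 then p else (D / (2 * ‖p‖)) • p

open Finset Real

theorem norm_smul_sub_le_norm_sub {E : Type*} [NormedAddCommGroup E] [InnerProductSpace ℝ E]
    {p u : E} {s : ℝ} (hs0 : 0 ≤ s) (hs1 : s ≤ 1)
    (hu : ‖u‖ ≤ s * ‖p‖) : ‖s • p - u‖ ≤ ‖p - u‖ := by
  have hcs : ⟪p, u⟫_ℝ ≤ ‖p‖ * ‖u‖ := real_inner_le_norm p u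
  have hsq : ‖s • p - u‖ ^ 2 ≤ ‖p - u‖ ^ 2 := by
    rw [norm_sub_sq_real, norm_sub_sq_real, real_inner_smul_left, norm_smul,
      Real.norm_eq_abs, abs_of_nonneg hs0, mul_pow]
    nlinarith [mul_nonneg (sub_nonneg.2 hs1) (sub_nonneg.2 hcs),
      mul_nonneg (mul_nonneg (sub_nonneg.2 hs1) (norm_nonneg p)) (sub_nonneg.2 hu),
      mul_nonneg (sq_nonneg (1 - s)) (sq_nonneg ‖p‖)]
  exact pow_le_pow_iff_left₀ (norm_nonneg _) (norm_nonneg _) two_ne_zero |>.mp hsq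

theorem norm_ballProj_le {d : ℕ} {D : ℝ} (hD : 0 ≤ D) (p : EuclideanSpace ℝ (Fin d)) :
    ‖ballProj d D p‖ ≤ D / 2 := by
  unfold ballProj
  split_ifs with h
  · exact h
  · have hp : 0 < ‖p‖ := by linarith
    rw [norm_smul, Real.norm_of_nonneg (by positivity)]
    field_simp
    rfl

theorem norm_ballProj_sub_le {d : ℕ} {D : ℝ} (p : EuclideanSpace ℝ (Fin d))
    {u : EuclideanSpace ℝ (Fin d)} (hu : ‖u‖ ≤ D / 2) : ‖ballProj d D p - u‖ ≤ ‖p - u‖ := by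
  unfold ballProj
  split_ifs with h
  · exact le_rfl
  · have hp : 0 < ‖p‖ := (norm_nonneg u).trans_lt (hu.trans_lt (not_le.mp h))
    have hscale : D / (2 * ‖p‖) * ‖p‖ = D / 2 := by field_simp
    have hD : 0 ≤ D := by linarith [norm_nonneg u]
    refine norm_smul_sub_le_norm_sub (by positivity) ?_ (by rwa [hscale])
    rw [div_le_one (by positivity)]
    linarith [not_le.mp h]

theorem inv_le_two_mul_log_add_one_sub_log {x : ℝ} (hx : 1 ≤ x) :
    x⁻¹ ≤ 2 * (log (x + 1) - log x) := by
  have hx0 : 0 < x := by linarith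
  have hlog := one_sub_inv_le_log_of_pos (show 0 < (x + 1) / x by positivity)
  rw [log_div (by positivity) hx0.ne', inv_div] at hlog
  have : 1 - x / (x + 1) = (x + 1)⁻¹ := by field_simp; ring
  have : x⁻¹ ≤ 2 * (x + 1)⁻¹ := by
    rw [← div_eq_mul_inv, inv_le_comm₀ hx0 (by positivity), inv_div]
    linarith
  linarith

theorem sum_Icc_inv_add_le_two_mul_log {c : ℝ} (hc : 0 ≤ c) (N : ℕ) :
    ∑ t ∈ Icc 1 N, ((t : ℝ) + c)⁻¹ ≤ 2 * (log (N + 1 + c) - log (1 + c)) := by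
  induction N with
  | zero => simp
  | succ n ih =>
    rw [sum_Icc_succ_top (by omega)]
    have := inv_le_two_mul_log_add_one_sub_log (x := n + 1 + c) (by linarith)
    rw [show (n : ℝ) + 1 + c + 1 = ↑(n + 1) + 1 + c by push_cast; ring] at this
    push_cast at this ⊢
    linarith

section OnlineGradientDescent

variable {E : Type*} [NormedAddCommGroup E] [InnerProductSpace ℝ E]

theorem ogd_step_le {x x' u g : E} {fx fu lam s G : ℝ} (hlam : 0 < lam) (hs : 0 < s)
    (hsc : fx + ⟪g, u - x⟫_ℝ + lam / 2 * ‖u - x‖ ^ 2 ≤ fu) (hg : ‖g‖ ≤ G)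
    (hx' : ‖x' - u‖ ≤ ‖x - (1 / (lam * s)) • g - u‖) :
    fx - fu ≤ lam / 2 * ((s - 1) * ‖x - u‖ ^ 2 - s * ‖x' - u‖ ^ 2) + G ^ 2 / (2 * lam * s) := by
  set η := 1 / (lam * s) with hη
  have hexpand : ‖x - η • g - u‖ ^ 2 = ‖x - u‖ ^ 2 - 2 * η * ⟪x - u, g⟫_ℝ + η ^ 2 * ‖g‖ ^ 2 := by
    rw [sub_right_comm, norm_sub_sq_real, real_inner_smul_right, norm_smul, Real.norm_eq_abs,
      mul_pow, sq_abs]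
    ring
  have hmove : ‖x' - u‖ ^ 2 ≤ ‖x - u‖ ^ 2 - 2 * η * ⟪x - u, g⟫_ℝ + η ^ 2 * G ^ 2 := by
    have hx'sq := pow_le_pow_left₀ (norm_nonneg _) hx' 2
    have hgsq := mul_le_mul_of_nonneg_left (pow_le_pow_left₀ (norm_nonneg _) hg 2) (sq_nonneg η)
    linarith
  have hsc' : fx - fu ≤ ⟪x - u, g⟫_ℝ - lam / 2 * ‖x - u‖ ^ 2 := by
    rw [← neg_sub x u, inner_neg_right, norm_neg, real_inner_comm] at hsc
    linarith
  have hscaled : lam * s * ‖x' - u‖ ^ 2 ≤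
      lam * s * ‖x - u‖ ^ 2 - 2 * ⟪x - u, g⟫_ℝ + G ^ 2 / (lam * s) := by
    refine (mul_le_mul_of_nonneg_left hmove (by positivity : 0 ≤ lam * s)).trans_eq ?_
    rw [hη]
    field_simp
  have hsplit : lam / 2 * ((s - 1) * ‖x - u‖ ^ 2 - s * ‖x' - u‖ ^ 2) + G ^ 2 / (2 * lam * s) =
      (lam * s * ‖x - u‖ ^ 2 - lam * s * ‖x' - u‖ ^ 2 + G ^ 2 / (lam * s)) / 2
        - lam / 2 * ‖x - u‖ ^ 2 := by
    field_simp
    ring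
  linarith

variable {K : Set E} {P : E → E} {f : ℕ → E → ℝ} {g : ℕ → E → E} {w : ℕ → E} {lam c G : ℝ}
  {T : ℕ}

theorem ogd_iterate_mem (hPK : ∀ p, P p ∈ K) (hw1 : w 1 ∈ K)
    (hupd : ∀ t ∈ Icc 1 (T - 1), w (t + 1) = P (w t - (1 / (lam * ((t : ℝ) + c))) • g t (w t))) :
    ∀ t ∈ Icc 1 T, w t ∈ K := by
  rintro (_ | _ | n) ht
  · simp at ht
  · exact hw1
  · rw [hupd (n + 1) (by simp only [mem_Icc] at ht ⊢; omega)]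
    exact hPK _

theorem ogd_switching_le (hlam : 0 < lam) (hc : 0 ≤ c)
    (hP : ∀ p, ∀ u ∈ K, ‖P p - u‖ ≤ ‖p - u‖) (hPK : ∀ p, P p ∈ K)
    (hgrad : ∀ t ∈ Icc 1 T, ∀ v ∈ K, ‖g t v‖ ≤ G) (hw1 : w 1 ∈ K)
    (hupd : ∀ t ∈ Icc 1 (T - 1), w (t + 1) = P (w t - (1 / (lam * ((t : ℝ) + c))) • g t (w t))) :
    ∑ t ∈ Icc 2 T, ‖w t - w (t - 1)‖ ≤ G / lam * ∑ t ∈ Icc 1 T, ((t : ℝ) + c)⁻¹ := by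
  have hw := ogd_iterate_mem hPK hw1 hupd
  have hmove : ∀ t ∈ Ico 1 T, ‖w (t + 1) - w t‖ ≤ G / lam * ((t : ℝ) + c)⁻¹ := by
    intro t ht
    have ht' : t ∈ Icc 1 T := Ico_subset_Icc_self ht
    have htc : 0 < (t : ℝ) + c := by have := (mem_Icc.mp ht').1; positivity
    rw [hupd t (by simp only [mem_Ico, mem_Icc] at ht ⊢; omega)]
    calc ‖P (w t - (1 / (lam * ((t : ℝ) + c))) • g t (w t)) - w t‖
        ≤ ‖(w t - (1 / (lam * ((t : ℝ) + c))) • g t (w t)) - w t‖ := hP _ _ (hw t ht')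
      _ = 1 / (lam * ((t : ℝ) + c)) * ‖g t (w t)‖ := by
        rw [sub_sub_cancel_left, norm_neg, norm_smul, Real.norm_of_nonneg (by positivity)]
      _ ≤ 1 / (lam * ((t : ℝ) + c)) * G :=
        mul_le_mul_of_nonneg_left (hgrad t ht' _ (hw t ht')) (by positivity)
      _ = G / lam * ((t : ℝ) + c)⁻¹ := by field_simp
  calc ∑ t ∈ Icc 2 T, ‖w t - w (t - 1)‖ = ∑ t ∈ Ico 1 T, ‖w (t + 1) - w t‖ := by
        rw [← Ico_add_one_right_eq_Icc]
        exact (sum_Ico_add' (fun t => ‖w t - w (t - 1)‖) 1 T 1).symm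
    _ ≤ ∑ t ∈ Ico 1 T, G / lam * ((t : ℝ) + c)⁻¹ := sum_le_sum hmove
    _ ≤ ∑ t ∈ Icc 1 T, G / lam * ((t : ℝ) + c)⁻¹ :=
        sum_le_sum_of_subset_of_nonneg Ico_subset_Icc_self fun t ht _ =>
          have hG : 0 ≤ G := (norm_nonneg _).trans (hgrad t ht _ (hw t ht))
          have : 1 ≤ t := (mem_Icc.mp ht).1
          by positivity
    _ = G / lam * ∑ t ∈ Icc 1 T, ((t : ℝ) + c)⁻¹ := (mul_sum ..).symm

theorem ogd_regret_le (hlam : 0 < lam) (hc : 0 ≤ c)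
    (hP : ∀ p, ∀ u ∈ K, ‖P p - u‖ ≤ ‖p - u‖) (hPK : ∀ p, P p ∈ K)
    (hsc : ∀ t ∈ Icc 1 T, ∀ u ∈ K, ∀ v ∈ K,
      f t v + ⟪g t v, u - v⟫_ℝ + lam / 2 * ‖u - v‖ ^ 2 ≤ f t u)
    (hgrad : ∀ t ∈ Icc 1 T, ∀ v ∈ K, ‖g t v‖ ≤ G) (hw1 : w 1 ∈ K)
    (hupd : ∀ t ∈ Icc 1 (T - 1), w (t + 1) = P (w t - (1 / (lam * ((t : ℝ) + c))) • g t (w t)))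
    {u : E} (hu : u ∈ K) :
    ∑ t ∈ Icc 1 T, f t (w t) - ∑ t ∈ Icc 1 T, f t u ≤
      lam * c / 2 * ‖w 1 - u‖ ^ 2 + G ^ 2 / (2 * lam) * ∑ t ∈ Icc 1 T, ((t : ℝ) + c)⁻¹ := by
  have hw := ogd_iterate_mem hPK hw1 hupd
  set next : ℕ → E := fun t => P (w t - (1 / (lam * ((t : ℝ) + c))) • g t (w t)) with hnext
  have hstep : ∀ t ∈ Icc 1 T, f t (w t) - f t u ≤
      lam / 2 * (((t : ℝ) + c - 1) * ‖w t - u‖ ^ 2 - ((t : ℝ) + c) * ‖next t - u‖ ^ 2) +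
        G ^ 2 / (2 * lam) * ((t : ℝ) + c)⁻¹ := by
    intro t ht
    have htc : 0 < (t : ℝ) + c := by have := (mem_Icc.mp ht).1; positivity
    refine (ogd_step_le hlam htc (hsc t ht u hu _ (hw t ht)) (hgrad t ht _ (hw t ht))
      (hP _ u hu)).trans_eq ?_
    simp only [hnext]
    field_simp
  -- Carrying the potential of `next n` rather than of `w (n + 1)` lets the last round `n = T`,
  -- after which `w` is unconstrained, be handled like the others.
  have hpartial : ∀ n, 1 ≤ n → n ≤ T → ∑ t ∈ Icc 1 n, (f t (w t) - f t u) ≤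
      lam / 2 * (c * ‖w 1 - u‖ ^ 2 - ((n : ℝ) + c) * ‖next n - u‖ ^ 2) +
        G ^ 2 / (2 * lam) * ∑ t ∈ Icc 1 n, ((t : ℝ) + c)⁻¹ := by
    intro n hn
    induction n, hn using Nat.le_induction with
    | base =>
      intro h1T
      simpa only [Icc_self, sum_singleton, Nat.cast_one, add_sub_cancel_left]
        using hstep 1 (by simp [h1T])
    | succ n hn ih =>
      intro hnT
      have hwn : w (n + 1) = next n := hupd n (by simp only [mem_Icc]; omega)
      have hlast := hstep (n + 1) (by simp only [mem_Icc]; omega)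
      rw [sum_Icc_succ_top (by omega), sum_Icc_succ_top (by omega)]
      rw [hwn] at hlast ⊢
      push_cast at hlast ⊢
      linarith [ih (by omega)]
  rw [← sum_sub_distrib]
  rcases Nat.eq_zero_or_pos T with rfl | hT
  · simp only [Icc_eq_empty_of_lt one_pos, sum_empty, mul_zero, add_zero]
    positivity
  have hlast : 0 ≤ lam / 2 * (((T : ℝ) + c) * ‖next T - u‖ ^ 2) := by positivity
  linarith [hpartial T hT le_rfl]

end OnlineGradientDescent

theorem sum_Icc_inv_add_le_of_exp {T : ℕ} {a c : ℝ} (hc : 0 ≤ c)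
    (h : (T : ℝ) + 1 + c = (1 + c) * exp a) : ∑ t ∈ Icc 1 T, ((t : ℝ) + c)⁻¹ ≤ 2 * a :=
  (sum_Icc_inv_add_le_two_mul_log hc T).trans_eq <| by
    rw [h, log_mul (by positivity) (exp_pos a).ne', log_exp]
    ring

theorem stmt17_general (d T : ℕ) (D G lam S c : ℝ) (hlam : 0 < lam)
    (hG : 0 < G) (hS0 : 0 < S) (hS : S ≤ (2 * G / lam) * Real.log ((T : ℝ) + 1))
    (hcdef : c = (T : ℝ) / (Real.exp (lam * S / (2 * G)) - 1) - 1)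
    (f : ℕ → EuclideanSpace ℝ (Fin d) → ℝ)
    (hsc : ∀ t ∈ Finset.Icc 1 T,
      ∀ u ∈ Metric.closedBall (0 : EuclideanSpace ℝ (Fin d)) (D / 2),
      ∀ v ∈ Metric.closedBall (0 : EuclideanSpace ℝ (Fin d)) (D / 2),
        f t v + ⟪gradient (f t) v, u - v⟫_ℝ + lam / 2 * ‖u - v‖ ^ 2 ≤ f t u)
    (hgrad : ∀ t ∈ Finset.Icc 1 T,
      ∀ v ∈ Metric.closedBall (0 : EuclideanSpace ℝ (Fin d)) (D / 2), ‖gradient (f t) v‖ ≤ G)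
    (w : ℕ → EuclideanSpace ℝ (Fin d))
    (hw1 : w 1 ∈ Metric.closedBall (0 : EuclideanSpace ℝ (Fin d)) (D / 2))
    (hupd : ∀ t ∈ Finset.Icc 1 (T - 1),
      w (t + 1) = ballProj d D (w t - (1 / (lam * ((t : ℝ) + c))) • gradient (f t) (w t))) :
    (∑ t ∈ Finset.Icc 2 T, ‖w t - w (t - 1)‖ ≤ S) ∧
    (∑ t ∈ Finset.Icc 1 T, f t (w t)) -
        (⨅ v : Metric.closedBall (0 : EuclideanSpace ℝ (Fin d)) (D / 2),
          ∑ t ∈ Finset.Icc 1 T, f t (v : EuclideanSpace ℝ (Fin d))) ≤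
      lam * (T : ℝ) * D ^ 2 / (Real.exp (lam * S / (2 * G)) - 1) + G * S := by
  set a := lam * S / (2 * G) with ha
  have ha0 : 0 < a := by positivity
  have hexp : 0 < exp a - 1 := by linarith [add_one_lt_exp ha0.ne']
  have hexpT : exp a ≤ T + 1 := by
    rw [← le_log_iff_exp_le (by positivity), ha, div_le_iff₀ (by positivity)]
    rw [div_mul_eq_mul_div, le_div_iff₀ hlam] at hS
    linarith
  have hc1 : (1 + c) * (exp a - 1) = T := by rw [hcdef]; field_simp; ring
  have hc : 0 ≤ c := by
    have : 1 * (exp a - 1) ≤ (1 + c) * (exp a - 1) := by linarith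
    linarith [le_of_mul_le_mul_right this hexp]
  have hsum := sum_Icc_inv_add_le_of_exp (T := T) hc (by linarith)
  have hD : 0 ≤ D := by linarith [norm_nonneg (w 1), mem_closedBall_zero_iff.mp hw1]
  have hP : ∀ p, ∀ u ∈ Metric.closedBall (0 : EuclideanSpace ℝ (Fin d)) (D / 2),
      ‖ballProj d D p - u‖ ≤ ‖p - u‖ :=
    fun p _ hu => norm_ballProj_sub_le p (mem_closedBall_zero_iff.mp hu)
  have hPK : ∀ p, ballProj d D p ∈ Metric.closedBall (0 : EuclideanSpace ℝ (Fin d)) (D / 2) :=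
    fun p => mem_closedBall_zero_iff.mpr (norm_ballProj_le hD p)
  have hGS : G / lam * (2 * a) = S := by rw [ha]; field_simp
  refine ⟨(ogd_switching_le hlam hc hP hPK hgrad hw1 hupd).trans ?_, ?_⟩
  · rw [← hGS]
    gcongr
  have : Nonempty (Metric.closedBall (0 : EuclideanSpace ℝ (Fin d)) (D / 2)) := ⟨⟨w 1, hw1⟩⟩
  refine sub_le_comm.mp (le_ciInf fun u => sub_le_comm.mp ?_)
  have hdist : ‖w 1 - u‖ ^ 2 ≤ D ^ 2 := by
    have hw1' := mem_closedBall_zero_iff.mp hw1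
    have hu := mem_closedBall_zero_iff.mp u.2
    exact pow_le_pow_left₀ (norm_nonneg _) (by linarith [norm_sub_le (w 1) u]) 2
  calc _ ≤ _ := ogd_regret_le hlam hc hP hPK hsc hgrad hw1 hupd u.2
    _ ≤ lam * c / 2 * D ^ 2 + G ^ 2 / (2 * lam) * (2 * a) := by gcongr
    _ = lam * c / 2 * D ^ 2 + G * S / 2 := by rw [← hGS]; field_simp
    _ ≤ lam * (1 + c) * D ^ 2 + G * S := by
      linarith [mul_nonneg hlam.le (sq_nonneg D), mul_nonneg (mul_nonneg hlam.le hc) (sq_nonneg D),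
        mul_pos hG hS0]
    _ = lam * T * D ^ 2 / (exp a - 1) + G * S := by rw [← hc1]; field_simp

/-- For `λ`-strongly convex differentiable losses with gradients bounded by `G`
on the ball `𝒟`, if `0 < S ≤ (2G/λ)·log (T + 1)` and `c = T/(exp (λS/(2G)) − 1) − 1`, then OGD
with step sizes `η_t = 1/(λ(t + c))` satisfies the continuous switching constraint and has regret
at most `λ·T·D²/(exp (λS/(2G)) − 1) + G·S`. -/
theorem stmt17 (d T : ℕ) (hT : 3 ≤ T) (D G lam S c : ℝ) (hD : 0 < D) (hlam : 0 < lam)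
    (hG : 0 < G) (hS0 : 0 < S) (hS : S ≤ (2 * G / lam) * Real.log ((T : ℝ) + 1))
    (hcdef : c = (T : ℝ) / (Real.exp (lam * S / (2 * G)) - 1) - 1)
    (f : ℕ → EuclideanSpace ℝ (Fin d) → ℝ)
    (hdiff : ∀ t ∈ Finset.Icc 1 T, Differentiable ℝ (f t))
    (hsc : ∀ t ∈ Finset.Icc 1 T,
      ∀ u ∈ Metric.closedBall (0 : EuclideanSpace ℝ (Fin d)) (D / 2),
      ∀ v ∈ Metric.closedBall (0 : EuclideanSpace ℝ (Fin d)) (D / 2),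
        f t v + ⟪gradient (f t) v, u - v⟫_ℝ + lam / 2 * ‖u - v‖ ^ 2 ≤ f t u)
    (hgrad : ∀ t ∈ Finset.Icc 1 T,
      ∀ v ∈ Metric.closedBall (0 : EuclideanSpace ℝ (Fin d)) (D / 2), ‖gradient (f t) v‖ ≤ G)
    (w : ℕ → EuclideanSpace ℝ (Fin d))
    (hw1 : w 1 ∈ Metric.closedBall (0 : EuclideanSpace ℝ (Fin d)) (D / 2))
    (hupd : ∀ t ∈ Finset.Icc 1 (T - 1),
      w (t + 1) = ballProj d D (w t - (1 / (lam * ((t : ℝ) + c))) • gradient (f t) (w t))) :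
    (∑ t ∈ Finset.Icc 2 T, ‖w t - w (t - 1)‖ ≤ S) ∧
    (∑ t ∈ Finset.Icc 1 T, f t (w t)) -
        (⨅ v : Metric.closedBall (0 : EuclideanSpace ℝ (Fin d)) (D / 2),
          ∑ t ∈ Finset.Icc 1 T, f t (v : EuclideanSpace ℝ (Fin d))) ≤
      lam * (T : ℝ) * D ^ 2 / (Real.exp (lam * S / (2 * G)) - 1) + G * S :=
  stmt17_general d T D G lam S c hlam hG hS0 hS hcdef f hsc hgrad w hw1 hupd
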